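/- Let α ∈ (0,1) and define the nonrandomized test φ : ℝ → {0,1} by φ(w) := 1 if w > −λ·log α or w ≤ 0, and φ(w) := 0 otherwise. Then ∫φ dμ_0 = α and, for every h ∈ ℝ, ∫φ dμ_h = min{α·e^{h/λ}, 1} + 1 − min{e^{h/λ}, 1}. In particular, combined with the two-sided power envelope, φ is a uniformly most powerful level-α test of μ_0 against {μ_h : h ≠ 0}, without any unbiasedness restriction. -/

import Mathlib

/-!
Under `μ_h` the upper tail is `μ_h (a, ∞) = min (e^{-(a-h)/λ}) 1`, by integrating the density
against its antiderivative `-e^{-(w-h)/λ}`; the lower tail `μ_h (-∞, b]` is the complementary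
probability. The rejection region of `φ` is the disjoint union `(-λ log α, ∞) ∪ (-∞, 0]`, and
`e^{-(-λ log α - h)/λ} = α e^{h/λ}`.
-/

open MeasureTheory Real

noncomputable section

attribute [local instance] Classical.propDecidable

def expShift (lam h : ℝ) : Measure ℝ :=
  (volume : Measure ℝ).withDensity fun w =>
    ENNReal.ofReal (lam⁻¹ * exp (-(w - h) / lam) * if h < w then 1 else 0)

section ExpShift

open Set Filter Topology

lemma expShift_apply (lam h : ℝ) {s : Set ℝ} (hs : MeasurableSet s) :
    expShift lam h s = ∫⁻ w in s ∩ Ioi h, ENNReal.ofReal (lam⁻¹ * exp (-(w - h) / lam)) := by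
  have hdensity : (fun w => ENNReal.ofReal (lam⁻¹ * exp (-(w - h) / lam) * if h < w then 1 else 0))
      = (Ioi h).indicator fun w => ENNReal.ofReal (lam⁻¹ * exp (-(w - h) / lam)) := by
    ext w
    by_cases hw : h < w <;> simp [hw]
  rw [expShift, withDensity_apply _ hs, hdensity, lintegral_indicator measurableSet_Ioi,
    Measure.restrict_restrict measurableSet_Ioi, inter_comm]

lemma hasDerivAt_neg_exp_neg_sub_div (lam h x : ℝ) :
    HasDerivAt (fun x : ℝ => -exp (-(x - h) / lam)) (lam⁻¹ * exp (-(x - h) / lam)) x := by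
  have hinner : HasDerivAt (fun x : ℝ => -(x - h) / lam) (-1 / lam) x :=
    ((hasDerivAt_id x).sub_const h).fun_neg.div_const lam
  exact hinner.exp.fun_neg.congr_deriv (by ring)

variable {lam : ℝ}

lemma tendsto_exp_neg_sub_div_atTop (hlam : 0 < lam) (h : ℝ) :
    Tendsto (fun x : ℝ => exp (-(x - h) / lam)) atTop (𝓝 0) := by
  refine tendsto_exp_atBot.comp (Tendsto.atBot_div_const hlam ?_)
  exact tendsto_neg_atTop_atBot.comp (tendsto_atTop_add_const_right _ (-h) tendsto_id)

lemma lintegral_Ioi_expShift_density (hlam : 0 < lam) (h a : ℝ) :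
    ∫⁻ x in Ioi a, ENNReal.ofReal (lam⁻¹ * exp (-(x - h) / lam)) =
      ENNReal.ofReal (exp (-(a - h) / lam)) := by
  have hderiv := fun x (_ : x ∈ Ici a) => hasDerivAt_neg_exp_neg_sub_div lam h x
  have hlim : Tendsto (fun x : ℝ => -exp (-(x - h) / lam)) atTop (𝓝 0) := by
    simpa using (tendsto_exp_neg_sub_div_atTop hlam h).neg
  have hint : IntegrableOn (fun x : ℝ => lam⁻¹ * exp (-(x - h) / lam)) (Ioi a) :=
    integrableOn_Ioi_deriv_of_nonneg' hderiv (fun x _ => by positivity) hlim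
  rw [← ofReal_integral_eq_lintegral_ofReal hint (.of_forall fun x => by positivity),
    integral_Ioi_of_hasDerivAt_of_tendsto' hderiv hint hlim, zero_sub, neg_neg]

lemma expShift_Ioi (hlam : 0 < lam) (h a : ℝ) :
    expShift lam h (Ioi a) = ENNReal.ofReal (min (exp (-(a - h) / lam)) 1) := by
  rw [expShift_apply lam h measurableSet_Ioi, Ioi_inter_Ioi, lintegral_Ioi_expShift_density hlam]
  congr 1
  rcases le_total a h with hah | hha
  · rw [max_eq_right hah, sub_self, neg_zero, zero_div, exp_zero, min_eq_right
      (one_le_exp (div_nonneg (neg_nonneg.2 (sub_nonpos.2 hah)) hlam.le))]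
  · rw [max_eq_left hha, min_eq_left
      (exp_le_one_iff.2 (div_nonpos_of_nonpos_of_nonneg (neg_nonpos.2 (sub_nonneg.2 hha)) hlam.le))]

lemma isProbabilityMeasure_expShift (hlam : 0 < lam) (h : ℝ) :
    IsProbabilityMeasure (expShift lam h) := by
  constructor
  rw [expShift_apply lam h MeasurableSet.univ, univ_inter,
    lintegral_Ioi_expShift_density hlam, sub_self, neg_zero, zero_div, exp_zero, ENNReal.ofReal_one]

lemma expShift_real_Ioi (hlam : 0 < lam) (h a : ℝ) :
    (expShift lam h).real (Ioi a) = min (exp (-(a - h) / lam)) 1 := by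
  rw [measureReal_def, expShift_Ioi hlam, ENNReal.toReal_ofReal (by positivity)]

lemma expShift_real_Iic (hlam : 0 < lam) (h b : ℝ) :
    (expShift lam h).real (Iic b) = 1 - min (exp (-(b - h) / lam)) 1 := by
  have := isProbabilityMeasure_expShift hlam h
  rw [← compl_Ioi, probReal_compl_eq_one_sub measurableSet_Ioi, expShift_real_Ioi hlam]

lemma expShift_real_Ioi_union_Iic (hlam : 0 < lam) (h : ℝ) {a b : ℝ} (hba : b ≤ a) :
    (expShift lam h).real (Ioi a ∪ Iic b) =
      min (exp (-(a - h) / lam)) 1 + (1 - min (exp (-(b - h) / lam)) 1) := by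
  have := isProbabilityMeasure_expShift hlam h
  rw [measureReal_union (Iic_disjoint_Ioi hba).symm measurableSet_Iic,
    expShift_real_Ioi hlam, expShift_real_Iic hlam]

end ExpShift

/-- The nonrandomized two-sided test `φ(w) = 𝟙{w > −λ log α or w ≤ 0}` has exact size `α`
and attains the two-sided power envelope for every `h`: it is a uniformly most powerful
level-`α` test of `μ_0` against `{μ_h : h ≠ 0}`. -/
theorem ump_two_sided_test (lam α : ℝ) (hlam : 0 < lam) (hα : α ∈ Set.Ioo (0 : ℝ) 1) :
    ∫ w, (if -lam * Real.log α < w ∨ w ≤ 0 then (1 : ℝ) else 0) ∂ expShift lam 0 = α ∧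
    ∀ h : ℝ, ∫ w, (if -lam * Real.log α < w ∨ w ≤ 0 then (1 : ℝ) else 0) ∂ expShift lam h =
      min (α * exp (h / lam)) 1 + 1 - min (exp (h / lam)) 1 := by
  set c := -lam * Real.log α
  have hc : 0 ≤ c := mul_nonneg_of_nonpos_of_nonpos (neg_nonpos.2 hlam.le)
    (log_nonpos hα.1.le hα.2.le)
  have hc_tail (h : ℝ) : exp (-(c - h) / lam) = α * exp (h / lam) := by
    rw [show -(c - h) / lam = log α + h / lam by field_simp; ring, exp_add, exp_log hα.1]
  have hpower (h : ℝ) : ∫ w, (if c < w ∨ w ≤ 0 then (1 : ℝ) else 0) ∂ expShift lam h =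
      min (α * exp (h / lam)) 1 + 1 - min (exp (h / lam)) 1 := by
    have hindicator : (fun w : ℝ => if c < w ∨ w ≤ 0 then (1 : ℝ) else 0)
        = (Set.Ioi c ∪ Set.Iic 0).indicator 1 := by
      ext w
      by_cases hw : c < w ∨ w ≤ 0 <;> simp [hw]
    rw [hindicator, integral_indicator_one (measurableSet_Ioi.union measurableSet_Iic),
      expShift_real_Ioi_union_Iic hlam h hc, hc_tail, zero_sub, neg_neg]
    ring
  refine ⟨?_, hpower⟩
  rw [hpower, zero_div, exp_zero, mul_one, min_eq_left hα.2.le, min_self]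
  ring
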